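/- Let R be a commutative noetherian local ring, X an R-module, and {X_i}_{i∈I} a family of R-modules (I an arbitrary index set). If X ≼_R X_i for every i ∈ I and Y is an R-module belonging to Add{X_i | i ∈ I}, then X ≼_R Y. -/

import Mathlib

/-!
Common definitions for formalizing (A)-, (B)-properties and (C)-relations
(Kosaka, "Characterizing regular local rings via analogues of (*)-properties").
-/

universe u v w

open IsLocalRing DirectSum TensorProduct

noncomputable section

/-- A bundled (possibly infinitely generated) module over the ring `R`. -/
structure ModuleAux (R : Type u) [CommRing R] where
  carrier : Type v
  [isAddCommGroup : AddCommGroup carrier]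
  [isModule : Module R carrier]

attribute [instance] ModuleAux.isAddCommGroup ModuleAux.isModule

/-- `depth R = 0` : every element of the maximal ideal is a zerodivisor. -/
def DepthZero (R : Type u) [CommRing R] [IsLocalRing R] : Prop :=
  ∀ x ∈ maximalIdeal R, x ∉ nonZeroDivisors R

/-- `depth R > 0` : the maximal ideal contains an `R`-regular element. -/
def DepthPos (R : Type u) [CommRing R] [IsLocalRing R] : Prop :=
  ∃ x ∈ maximalIdeal R, x ∈ nonZeroDivisors R

/-- The socle `Soc R = {r : R | 𝔪 r = 0}` of a local ring, as an ideal. -/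
def Socle (R : Type u) [CommRing R] [IsLocalRing R] : Ideal R :=
  (maximalIdeal R).annihilator

theorem span_singleton_ne_top {R : Type u} [CommRing R] [IsLocalRing R] {x : R}
    (hx : x ∈ maximalIdeal R) : Ideal.span {x} ≠ ⊤ := by
  intro h
  have hle : Ideal.span {x} ≤ maximalIdeal R := by
    rw [Ideal.span_le, Set.singleton_subset_iff]; exact hx
  rw [h] at hle
  exact (maximalIdeal.isMaximal R).ne_top (top_le_iff.mp hle)

/-- `R/xR` is a local ring whenever `x ∈ 𝔪`. -/
def quotIsLocalRing (R : Type u) [CommRing R] [IsLocalRing R] {x : R}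
    (hx : x ∈ maximalIdeal R) : IsLocalRing (R ⧸ Ideal.span {x}) :=
  letI := Ideal.Quotient.nontrivial_iff.mpr (span_singleton_ne_top hx)
  IsLocalRing.of_surjective' (Ideal.Quotient.mk _) Ideal.Quotient.mk_surjective

/-- A non-maximal prime ideal of a local ring. -/
def IsNonMaximalPrime (R : Type u) [CommRing R] [IsLocalRing R] (p : Ideal R) : Prop :=
  p.IsPrime ∧ p ≠ maximalIdeal R

/-- A property of (possibly infinitely generated) modules over noetherian local rings. -/
def ModuleProperty :=
  ∀ (R : Type u) [CommRing R] [IsNoetherianRing R] [IsLocalRing R]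
    (M : Type v) [AddCommGroup M] [Module R M], Prop

namespace ModuleProperty

/-- `M/xM` satisfies `P` as a module over `R/xR`. -/
def QuotSat (P : ModuleProperty.{u, v}) (R : Type u) [CommRing R] [IsNoetherianRing R]
    [IsLocalRing R] (M : Type v) [AddCommGroup M] [Module R M]
    {x : R} (hx : x ∈ maximalIdeal R) : Prop :=
  letI := quotIsLocalRing R hx
  P (R ⧸ Ideal.span {x}) (M ⧸ (Ideal.span {x} • ⊤ : Submodule R M))

/-- Condition (P1) : `P` descends along quotients by regular elements in `𝔪 \ 𝔪²`. -/
def SatP1 (P : ModuleProperty.{u, v}) : Prop :=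
  ∀ (R : Type u) [CommRing R] [IsNoetherianRing R] [IsLocalRing R]
    (M : Type v) [AddCommGroup M] [Module R M],
    P R M → ∀ (x : R) (hx : x ∈ maximalIdeal R), x ∉ maximalIdeal R ^ 2 →
      x ∈ nonZeroDivisors R → P.QuotSat R M hx

/-- Condition (P1') : if `depth R > 0` then, away from finitely many non-maximal primes,
`P` descends along quotients by regular elements in `𝔪 \ 𝔪²`. -/
def SatP1' (P : ModuleProperty.{u, v}) : Prop :=
  ∀ (R : Type u) [CommRing R] [IsNoetherianRing R] [IsLocalRing R]
    (M : Type v) [AddCommGroup M] [Module R M],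
    DepthPos R → P R M →
      ∃ s : Finset (Ideal R), (∀ p ∈ s, IsNonMaximalPrime R p) ∧
        ∀ (x : R) (hx : x ∈ maximalIdeal R), x ∉ maximalIdeal R ^ 2 →
          (∀ p ∈ s, x ∉ p) → x ∈ nonZeroDivisors R → P.QuotSat R M hx

/-- Condition (P2) : if `depth R = 0` and `M` satisfies `P`, then `Soc R ⊄ Ann_R M`. -/
def SatP2 (P : ModuleProperty.{u, v}) : Prop :=
  ∀ (R : Type u) [CommRing R] [IsNoetherianRing R] [IsLocalRing R]
    (M : Type v) [AddCommGroup M] [Module R M],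
    DepthZero R → P R M → ¬ Socle R ≤ Module.annihilator R M

/-- Condition (P3) : if `depth R = 0`, `M` satisfies `P` and `R ≠ k`,
then `Soc R ⊆ Ann_R M`. -/
def SatP3 (P : ModuleProperty.{u, v}) : Prop :=
  ∀ (R : Type u) [CommRing R] [IsNoetherianRing R] [IsLocalRing R]
    (M : Type v) [AddCommGroup M] [Module R M],
    DepthZero R → P R M → maximalIdeal R ≠ ⊥ → Socle R ≤ Module.annihilator R M

/-- Condition (*1) : `P` descends along quotients by `R`-regular elements. -/
def SatStar1 (P : ModuleProperty.{u, v}) : Prop :=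
  ∀ (R : Type u) [CommRing R] [IsNoetherianRing R] [IsLocalRing R]
    (M : Type v) [AddCommGroup M] [Module R M],
    P R M → ∀ (x : R) (hx : x ∈ maximalIdeal R), x ∈ nonZeroDivisors R → P.QuotSat R M hx

/-- Condition (*2) : if `depth R = 0` and `M` satisfies `P` then `Ann_R M = 0`. -/
def SatStar2 (P : ModuleProperty.{u, v}) : Prop :=
  ∀ (R : Type u) [CommRing R] [IsNoetherianRing R] [IsLocalRing R]
    (M : Type v) [AddCommGroup M] [Module R M],
    DepthZero R → P R M → Module.annihilator R M = ⊥

end ModuleProperty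

/-- An (A)-property: a property satisfying (P1) and (P2). -/
def IsAProperty (P : ModuleProperty.{u, v}) : Prop := P.SatP1 ∧ P.SatP2

/-- An (A')-property: a property satisfying (P1') and (P2). -/
def IsA'Property (P : ModuleProperty.{u, v}) : Prop := P.SatP1' ∧ P.SatP2

/-- A (B)-property: a property satisfying (P1) and (P3). -/
def IsBProperty (P : ModuleProperty.{u, v}) : Prop := P.SatP1 ∧ P.SatP3

/-- A (B')-property: a property satisfying (P1') and (P3). -/
def IsB'Property (P : ModuleProperty.{u, v}) : Prop := P.SatP1' ∧ P.SatP3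

/-- A (*)-property (for not necessarily finitely generated modules). -/
def IsStarProperty (P : ModuleProperty.{u, v}) : Prop := P.SatStar1 ∧ P.SatStar2

/-- `M ∈ 𝒫_{A'}(R)` : `M` satisfies some (A')-property over `R`. -/
def MemPA' (R : Type u) [CommRing R] [IsNoetherianRing R] [IsLocalRing R]
    (M : Type v) [AddCommGroup M] [Module R M] : Prop :=
  ∃ P : ModuleProperty.{u, v}, IsA'Property P ∧ P R M

/-- `M ∈ 𝒫_{B'}(R)` : `M` satisfies some (B')-property over `R`. -/
def MemPB' (R : Type u) [CommRing R] [IsNoetherianRing R] [IsLocalRing R]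
    (M : Type v) [AddCommGroup M] [Module R M] : Prop :=
  ∃ P : ModuleProperty.{u, v}, IsB'Property P ∧ P R M

/-- `M` satisfies some (*)-property over `R`. -/
def MemPStar (R : Type u) [CommRing R] [IsNoetherianRing R] [IsLocalRing R]
    (M : Type v) [AddCommGroup M] [Module R M] : Prop :=
  ∃ P : ModuleProperty.{u, v}, IsStarProperty P ∧ P R M

/-- A relation of (possibly infinitely generated) modules over noetherian local rings. -/
def ModuleRelation :=
  ∀ (R : Type u) [CommRing R] [IsNoetherianRing R] [IsLocalRing R]
    (M : Type v) [AddCommGroup M] [Module R M]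
    (N : Type v) [AddCommGroup N] [Module R N], Prop

namespace ModuleRelation

/-- `M/xM ≤_{R/xR} N/xN`. -/
def QuotRel (rel : ModuleRelation.{u, v}) (R : Type u) [CommRing R] [IsNoetherianRing R]
    [IsLocalRing R] (M : Type v) [AddCommGroup M] [Module R M]
    (N : Type v) [AddCommGroup N] [Module R N] {x : R} (hx : x ∈ maximalIdeal R) : Prop :=
  letI := quotIsLocalRing R hx
  rel (R ⧸ Ideal.span {x}) (M ⧸ (Ideal.span {x} • ⊤ : Submodule R M))
    (N ⧸ (Ideal.span {x} • ⊤ : Submodule R N))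

/-- Condition (R1). -/
def SatR1 (rel : ModuleRelation.{u, v}) : Prop :=
  ∀ (R : Type u) [CommRing R] [IsNoetherianRing R] [IsLocalRing R]
    (M : Type v) [AddCommGroup M] [Module R M] (N : Type v) [AddCommGroup N] [Module R N],
    rel R M N → ∀ (x : R) (hx : x ∈ maximalIdeal R), x ∉ maximalIdeal R ^ 2 →
      x ∈ nonZeroDivisors R → rel.QuotRel R M N hx

/-- Condition (R1'). -/
def SatR1' (rel : ModuleRelation.{u, v}) : Prop :=
  ∀ (R : Type u) [CommRing R] [IsNoetherianRing R] [IsLocalRing R]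
    (M : Type v) [AddCommGroup M] [Module R M] (N : Type v) [AddCommGroup N] [Module R N],
    DepthPos R → rel R M N →
      ∃ s : Finset (Ideal R), (∀ p ∈ s, IsNonMaximalPrime R p) ∧
        ∀ (x : R) (hx : x ∈ maximalIdeal R), x ∉ maximalIdeal R ^ 2 →
          (∀ p ∈ s, x ∉ p) → x ∈ nonZeroDivisors R → rel.QuotRel R M N hx

/-- Condition (R2). -/
def SatR2 (rel : ModuleRelation.{u, v}) : Prop :=
  ∀ (R : Type u) [CommRing R] [IsNoetherianRing R] [IsLocalRing R]
    (M : Type v) [AddCommGroup M] [Module R M] (N : Type v) [AddCommGroup N] [Module R N],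
    DepthZero R → rel R M N → Module.annihilator R M ≤ Module.annihilator R N

end ModuleRelation

/-- A (C)-relation: a relation satisfying (R1) and (R2). -/
def IsCRelation (rel : ModuleRelation.{u, v}) : Prop := rel.SatR1 ∧ rel.SatR2

/-- A (C')-relation: a relation satisfying (R1') and (R2). -/
def IsC'Relation (rel : ModuleRelation.{u, v}) : Prop := rel.SatR1' ∧ rel.SatR2

/-- `M ≼_R N` : `M ≤_R N` for some (C)-relation `≤`. -/
def Preceq (R : Type u) [CommRing R] [IsNoetherianRing R] [IsLocalRing R]
    (M : Type v) [AddCommGroup M] [Module R M]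
    (N : Type v) [AddCommGroup N] [Module R N] : Prop :=
  ∃ rel : ModuleRelation.{u, v}, IsCRelation rel ∧ rel R M N

/-- `M ≼'_R N` : `M ≤_R N` for some (C')-relation `≤`. -/
def Preceq' (R : Type u) [CommRing R] [IsNoetherianRing R] [IsLocalRing R]
    (M : Type v) [AddCommGroup M] [Module R M]
    (N : Type v) [AddCommGroup N] [Module R N] : Prop :=
  ∃ rel : ModuleRelation.{u, v}, IsC'Relation rel ∧ rel R M N

/-- A noetherian local ring is regular if its maximal ideal can be generated by
`dim R` elements. -/
def IsRegularLocal (R : Type u) [CommRing R] [IsLocalRing R] : Prop :=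
  ∃ (n : ℕ) (x : Fin n → R), Ideal.span (Set.range x) = maximalIdeal R ∧
    (n : WithBot (WithTop ℕ)) = ringKrullDim R

/-- `M` is (isomorphic to) the `n`-th syzygy `Ω_R^n k` of the residue field `k` in its
minimal free resolution: `Ω^0 k = k`, and `Ω^{n+1} k` is the kernel of a surjection
`F → Ω^n k` with `F` finitely generated free and the kernel contained in `𝔪 F`. -/
def IsSyzygy (R : Type u) [CommRing R] [IsLocalRing R] :
    ℕ → (M : Type v) → [AddCommGroup M] → [Module R M] → Prop
  | 0, M, _, _ => Nonempty (M ≃ₗ[R] ResidueField R)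
  | n + 1, M, _, _ =>
      ∃ (F : ModuleAux.{u, v} R) (S : Submodule R F.carrier),
        Module.Free R F.carrier ∧ Module.Finite R F.carrier ∧
        S ≤ maximalIdeal R • (⊤ : Submodule R F.carrier) ∧
        IsSyzygy R n (F.carrier ⧸ S) ∧ Nonempty (M ≃ₗ[R] S)

/-- `Y` is a direct summand of a direct sum of modules from the family `X`. -/
def IsAddIn (R : Type u) [CommRing R] (Y : Type v) [AddCommGroup Y] [Module R Y]
    {ι : Type w} (X : ι → ModuleAux.{u, v} R) : Prop :=
  ∃ (κ : Type v) (g : κ → ι)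
    (s : Y →ₗ[R] ⨁ k : κ, (X (g k)).carrier)
    (r : (⨁ k : κ, (X (g k)).carrier) →ₗ[R] Y), r ∘ₗ s = LinearMap.id

/-- `M ∈ Add {Ω_R^n k ∣ n ≥ 0}`. -/
def InAddSyzygies (R : Type u) [CommRing R] [IsLocalRing R]
    (M : Type v) [AddCommGroup M] [Module R M] : Prop :=
  ∃ (ι : Type v) (n : ι → ℕ) (Z : ι → ModuleAux.{u, v} R),
    (∀ i, IsSyzygy R (n i) (Z i).carrier) ∧ IsAddIn R M Z

/-- `M/xM ∈ Add {Ω_{R/xR}^n k ∣ n ≥ 0}` as a module over `R/xR`. -/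
def InAddSyzygiesQuot (R : Type u) [CommRing R] [IsLocalRing R]
    (M : Type v) [AddCommGroup M] [Module R M] {x : R} (hx : x ∈ maximalIdeal R) : Prop :=
  letI := quotIsLocalRing R hx
  InAddSyzygies (R ⧸ Ideal.span {x}) (M ⧸ (Ideal.span {x} • ⊤ : Submodule R M))

/-- `Y ∈ Add K` : `Y` is a direct summand of a direct sum of copies of `K`. -/
def IsSummandOfCopies (R : Type u) [CommRing R] (Y : Type v) [AddCommGroup Y] [Module R Y]
    (K : Type v) [AddCommGroup K] [Module R K] : Prop :=
  ∃ (κ : Type v) (s : Y →ₗ[R] (κ →₀ K)) (r : (κ →₀ K) →ₗ[R] Y), r ∘ₗ s = LinearMap.id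

/-- `M` is a faithfully flat `R`-module: `M` is flat and tensoring with `M`
reflects the vanishing of modules. -/
def IsFaithfullyFlat (R : Type u) [CommRing R] (M : Type v) [AddCommGroup M]
    [Module R M] : Prop :=
  Module.Flat R M ∧
    ∀ N : ModuleAux.{u, v} R, Subsingleton (M ⊗[R] N.carrier) → Subsingleton N.carrier

/-- A system of parameters of a local ring `R` : `dim R` elements of the maximal ideal
generating an `𝔪`-primary ideal. -/
def IsSOP (R : Type u) [CommRing R] [IsLocalRing R] {d : ℕ} (x : Fin d → R) : Prop :=
  (d : WithBot (WithTop ℕ)) = ringKrullDim R ∧ (∀ i, x i ∈ maximalIdeal R) ∧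
    (Ideal.span (Set.range x)).radical = maximalIdeal R

/-- `L` is a balanced big Cohen–Macaulay `R`-module: every system of parameters of `R`
is an `L`-regular sequence. -/
def IsBalancedBigCM (R : Type u) [CommRing R] [IsLocalRing R]
    (L : Type v) [AddCommGroup L] [Module R L] : Prop :=
  ∀ (d : ℕ) (x : Fin d → R), IsSOP R x → RingTheory.Sequence.IsRegular L (List.ofFn x)

/-- `L/xL` is a balanced big Cohen–Macaulay module over `R/xR`. -/
def IsBalancedBigCMQuot (R : Type u) [CommRing R] [IsLocalRing R]
    (L : Type v) [AddCommGroup L] [Module R L] {x : R} (hx : x ∈ maximalIdeal R) : Prop :=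
  letI := quotIsLocalRing R hx
  IsBalancedBigCM (R ⧸ Ideal.span {x}) (L ⧸ (Ideal.span {x} • ⊤ : Submodule R L))

/-- The depth of a module over a local ring: the supremum of the lengths of
`M`-regular sequences consisting of elements of the maximal ideal. -/
def moduleDepth (R : Type u) [CommRing R] [IsLocalRing R]
    (M : Type v) [AddCommGroup M] [Module R M] : ℕ∞ :=
  sSup {n : ℕ∞ | ∃ (d : ℕ) (x : Fin d → R), n = d ∧ (∀ i, x i ∈ maximalIdeal R) ∧
    RingTheory.Sequence.IsRegular M (List.ofFn x)}

/-- `K` is a deep module: `depth K ≥ depth R`. -/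
def IsDeep (R : Type u) [CommRing R] [IsLocalRing R]
    (K : Type v) [AddCommGroup K] [Module R K] : Prop :=
  moduleDepth R R ≤ moduleDepth R K

/-- `K/xK` is a deep module over `R/xR`. -/
def IsDeepQuot (R : Type u) [CommRing R] [IsLocalRing R]
    (K : Type v) [AddCommGroup K] [Module R K] {x : R} (hx : x ∈ maximalIdeal R) : Prop :=
  letI := quotIsLocalRing R hx
  IsDeep (R ⧸ Ideal.span {x}) (K ⧸ (Ideal.span {x} • ⊤ : Submodule R K))

/-- `L/xL ∈ Add (K/xK)` over `R/xR`. -/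
def IsSummandOfCopiesQuot (R : Type u) [CommRing R] [IsLocalRing R]
    (Y : Type v) [AddCommGroup Y] [Module R Y] (K : Type v) [AddCommGroup K] [Module R K]
    {x : R} (hx : x ∈ maximalIdeal R) : Prop :=
  IsSummandOfCopies (R ⧸ Ideal.span {x}) (Y ⧸ (Ideal.span {x} • ⊤ : Submodule R Y))
    (K ⧸ (Ideal.span {x} • ⊤ : Submodule R K))

/-- The map `M/IM → N/IN` induced by an `R`-linear map `f : M → N`. -/
def quotMapByIdeal {R : Type u} [CommRing R] (I : Ideal R) {M N : Type v}
    [AddCommGroup M] [Module R M] [AddCommGroup N] [Module R N] (f : M →ₗ[R] N) :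
    (M ⧸ (I • ⊤ : Submodule R M)) →ₗ[R] N ⧸ (I • ⊤ : Submodule R N) :=
  Submodule.mapQ _ _ f (Submodule.smul_top_le_comap_smul_top I f)

end

/-!
The relation `M ≤ N :⇔ N ∈ Add {G ∣ M ≼ G}` is a (C)-relation: reduction modulo a regular
`x ∈ 𝔪 \ 𝔪²` preserves `≼` and commutes with direct sums and summands, and an ideal killing
every `G` kills every module in `Add {G}`. Since `≼` contains every (C)-relation, `X ≤ Y` gives
`X ≼ Y`.
-/

theorem isCRelation_preceq : IsCRelation Preceq.{u, v} :=
  ⟨fun R _ _ _ M _ _ N _ _ ⟨rel, hrel, h⟩ x hx hx2 hxreg =>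
      ⟨rel, hrel, hrel.1 R M N h x hx hx2 hxreg⟩,
    fun R _ _ _ M _ _ N _ _ hdepth ⟨_, hrel, h⟩ => hrel.2 R M N hdepth h⟩

theorem IsAddIn.le_annihilator {R : Type u} [CommRing R] {Y : Type v} [AddCommGroup Y]
    [Module R Y] {ι : Type w} {X : ι → ModuleAux.{u, v} R} {J : Ideal R}
    (hY : IsAddIn R Y X) (hJ : ∀ i, J ≤ Module.annihilator R (X i).carrier) :
    J ≤ Module.annihilator R Y := by
  obtain ⟨κ, g, s, r, hrs⟩ := hY
  have hr : Function.Surjective r := fun y => ⟨s y, LinearMap.congr_fun hrs y⟩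
  calc J ≤ ⨅ k, Module.annihilator R (X (g k)).carrier := le_iInf fun k => hJ (g k)
    _ = Module.annihilator R (⨁ k, (X (g k)).carrier) := Module.annihilator_dfinsupp.symm
    _ ≤ Module.annihilator R Y := r.annihilator_le_of_surjective hr

noncomputable def DirectSum.quotSMulTopEquiv {R : Type u} [CommRing R] (I : Ideal R)
    {κ : Type v} (M : κ → Type v) [∀ k, AddCommGroup (M k)] [∀ k, Module R (M k)] :
    ((⨁ k, M k) ⧸ (I • ⊤ : Submodule R (⨁ k, M k))) ≃ₗ[R]
      ⨁ k, M k ⧸ (I • ⊤ : Submodule R (M k)) := by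
  classical
  exact (TensorProduct.quotTensorEquivQuotSMul _ I).symm ≪≫ₗ
    TensorProduct.directSumRight R R (R ⧸ I) M ≪≫ₗ
    DFinsupp.mapRange.linearEquiv fun k => TensorProduct.quotTensorEquivQuotSMul (M k) I

theorem quotMapByIdeal_comp_eq_id {R : Type u} [CommRing R] (I : Ideal R) {M N : Type v}
    [AddCommGroup M] [Module R M] [AddCommGroup N] [Module R N]
    {s : M →ₗ[R] N} {r : N →ₗ[R] M} (hrs : r ∘ₗ s = LinearMap.id) :
    quotMapByIdeal I r ∘ₗ quotMapByIdeal I s = LinearMap.id := by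
  refine Submodule.linearMap_qext _ (LinearMap.ext fun m => ?_)
  simp [quotMapByIdeal, show r (s m) = m from LinearMap.congr_fun hrs m]

theorem IsAddIn.quotient {R : Type u} [CommRing R] (I : Ideal R) {Y : Type v} [AddCommGroup Y]
    [Module R Y] {ι : Type w} {X : ι → ModuleAux.{u, v} R} (hY : IsAddIn R Y X) :
    IsAddIn (R ⧸ I) (Y ⧸ (I • ⊤ : Submodule R Y))
      (fun i => (⟨(X i).carrier ⧸ (I • ⊤ : Submodule R (X i).carrier)⟩ :
        ModuleAux.{u, v} (R ⧸ I))) := by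
  obtain ⟨κ, g, s, r, hrs⟩ := hY
  let e := DirectSum.quotSMulTopEquiv I fun k => (X (g k)).carrier
  let s' := e.toLinearMap ∘ₗ quotMapByIdeal I s
  let r' := quotMapByIdeal I r ∘ₗ e.symm.toLinearMap
  have hrs' : r' ∘ₗ s' = LinearMap.id := by
    refine LinearMap.ext fun y => ?_
    simpa [r', s'] using LinearMap.congr_fun (quotMapByIdeal_comp_eq_id I hrs) y
  have hsurj : Function.Surjective (algebraMap R (R ⧸ I)) := Ideal.Quotient.mk_surjective
  exact ⟨κ, g, s'.extendScalarsOfSurjective hsurj, r'.extendScalarsOfSurjective hsurj,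
    LinearMap.ext fun y => LinearMap.congr_fun hrs' y⟩

/-- `M ≤ N` iff `N ∈ Add {G ∣ M ≼ G}`. -/
def addPreceq : ModuleRelation.{u, v} :=
  fun R _ _ _ M _ _ N _ _ => ∃ (ι : Type v) (G : ι → ModuleAux.{u, v} R),
    (∀ i, Preceq R M (G i).carrier) ∧ IsAddIn R N G

theorem isCRelation_addPreceq : IsCRelation addPreceq.{u, v} := by
  constructor
  · rintro R _ _ _ M _ _ N _ _ ⟨ι, G, hG, hN⟩ x hx hx2 hxreg
    let _ := quotIsLocalRing R hx
    exact ⟨ι, fun i => ⟨(G i).carrier ⧸ (Ideal.span {x} • ⊤ : Submodule R (G i).carrier)⟩,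
      fun i => isCRelation_preceq.1 R M _ (hG i) x hx hx2 hxreg, hN.quotient _⟩
  · rintro R _ _ _ M _ _ N _ _ hdepth ⟨ι, G, hG, hN⟩
    exact hN.le_annihilator fun i => isCRelation_preceq.2 R M _ hdepth (hG i)

/-- **Theorem (Statement 19).** If `X ≼_R Xᵢ` for all `i ∈ I` (an arbitrary index set)
and `Y ∈ Add {Xᵢ ∣ i ∈ I}`, then `X ≼_R Y`. -/
theorem preceq_of_isAddIn
    (R : Type u) [CommRing R] [IsNoetherianRing R] [IsLocalRing R]
    (X : Type v) [AddCommGroup X] [Module R X]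
    (ι : Type w) (F : ι → ModuleAux.{u, v} R)
    (hX : ∀ i : ι, Preceq R X (F i).carrier)
    (Y : Type v) [AddCommGroup Y] [Module R Y] (hY : IsAddIn R Y F) :
    Preceq R X Y := by
  obtain ⟨κ, g, s, r, hrs⟩ := hY
  exact ⟨addPreceq, isCRelation_addPreceq, κ, F ∘ g, fun k => hX (g k), κ, id, s, r, hrs⟩
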